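/- Let |φ⟩ = cos(α)|ψ_sym⟩ + i·sin(α)|Ψ⁻⟩ be a two-qubit state, where |ψ_sym⟩ is a real linear combination of the Bell states |Φ⁺⟩, |Φ⁻⟩, |Ψ⁺⟩ and |Ψ⁻⟩ = (|01⟩−|10⟩)/√2. Let {M^A_{a|x}} be qubit POVM elements and set M^B_{a|x} = (M^A_{a|x})* for all a, x. Then the resulting correlation P(a,b|x,y) = ⟨φ| M^A_{a|x} ⊗ M^B_{b|y} |φ⟩ is symmetric: P(a,b|x,y) = P(b,a|y,x) for all a, b, x, y. -/
import Mathlib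


open Matrix Kronecker ComplexOrder

/-- The Bell state `|Φ⁺⟩ = (|00⟩+|11⟩)/√2`. -/
noncomputable def PhiPlus : (Fin 2 × Fin 2) → ℂ := fun p =>
  (if p = (0, 0) then 1 else if p = (1, 1) then 1 else 0) / (Real.sqrt 2 : ℝ)

/-- The Bell state `|Φ⁻⟩ = (|00⟩−|11⟩)/√2`. -/
noncomputable def PhiMinus : (Fin 2 × Fin 2) → ℂ := fun p =>
  (if p = (0, 0) then 1 else if p = (1, 1) then -1 else 0) / (Real.sqrt 2 : ℝ)

/-- The Bell state `|Ψ⁺⟩ = (|01⟩+|10⟩)/√2`. -/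
noncomputable def PsiPlus : (Fin 2 × Fin 2) → ℂ := fun p =>
  (if p = (0, 1) then 1 else if p = (1, 0) then 1 else 0) / (Real.sqrt 2 : ℝ)

/-- The singlet state `|Ψ⁻⟩ = (|01⟩−|10⟩)/√2`. -/
noncomputable def PsiMinus : (Fin 2 × Fin 2) → ℂ := fun p =>
  (if p = (0, 1) then 1 else if p = (1, 0) then -1 else 0) / (Real.sqrt 2 : ℝ)

/-- For a Hermitian matrix `H`, the quadratic form `⟨φ|H|φ⟩` is real (fixed by `star`). -/
lemma herm_real' {n : Type*} [Fintype n] (H : Matrix n n ℂ)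
    (hH : ∀ i j, star (H j i) = H i j) (φ : n → ℂ) :
    star (star φ ⬝ᵥ H *ᵥ φ) = star φ ⬝ᵥ H *ᵥ φ := by
  simp only [dotProduct, mulVec, Finset.mul_sum, star_sum, star_mul', star_star, Pi.star_apply]
  rw [Finset.sum_comm]
  refine Finset.sum_congr rfl fun i _ => Finset.sum_congr rfl fun j _ => ?_
  rw [hH]
  ring

/-- If `φ` satisfies `S φ = φ*` (swap equals conjugate), then
`⟨φ| M ⊗ N* |φ⟩ = star ⟨φ| N ⊗ M* |φ⟩`. -/
lemma swap_conj' (φ : (Fin 2 × Fin 2) → ℂ)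
    (hsw : ∀ i j : Fin 2, φ (j, i) = star (φ (i, j)))
    (M N : Matrix (Fin 2) (Fin 2) ℂ) :
    star φ ⬝ᵥ ((M ⊗ₖ N.map (starRingEnd ℂ)) *ᵥ φ)
      = star (star φ ⬝ᵥ ((N ⊗ₖ M.map (starRingEnd ℂ)) *ᵥ φ)) := by
  have h00 := (hsw 0 0).symm
  have h11 := (hsw 1 1).symm
  have h01 := hsw 0 1
  simp only [dotProduct, mulVec, kroneckerMap_apply, Matrix.map_apply, Finset.mul_sum,
    star_sum, star_add, star_mul', star_star, Pi.star_apply, Fintype.sum_prod_type,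
    Fin.sum_univ_two, starRingEnd_apply]
  rw [h01, h00, h11]
  simp only [star_star]
  ring

/-- Measuring `|φ⟩ = cos α |ψ_sym⟩ + i sin α |Ψ⁻⟩` (with `|ψ_sym⟩` a real combination of
`|Φ⁺⟩, |Φ⁻⟩, |Ψ⁺⟩`) with mirror-conjugate POVMs `M^B_{a|x} = (M^A_{a|x})*` yields a
symmetric correlation. -/
theorem mirror_strategy_symmetric_correlation
    {A X : Type*} [Fintype A]
    (α c1 c2 c3 : ℝ) (hnorm : c1 ^ 2 + c2 ^ 2 + c3 ^ 2 = 1)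
    (MA MB : A → X → Matrix (Fin 2) (Fin 2) ℂ)
    (hpos : ∀ a x, (MA a x).PosSemidef)
    (hsum : ∀ x, ∑ a, MA a x = 1)
    (hconj : ∀ a x, MB a x = (MA a x).map (starRingEnd ℂ))
    (φ : (Fin 2 × Fin 2) → ℂ)
    (hφ : φ = fun p => (Real.cos α : ℂ) *
        ((c1 : ℂ) * PhiPlus p + (c2 : ℂ) * PhiMinus p + (c3 : ℂ) * PsiPlus p)
      + Complex.I * (Real.sin α : ℂ) * PsiMinus p)
    (P : A → A → X → X → ℂ)
    (hP : ∀ a b x y, P a b x y = star φ ⬝ᵥ ((MA a x ⊗ₖ MB b y) *ᵥ φ)) :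
    ∀ a b x y, P a b x y = P b a y x := by
  have hsw : ∀ i j : Fin 2, φ (j, i) = star (φ (i, j)) := by
    subst hφ
    simp only [Fin.forall_fin_two]
    refine ⟨⟨?_, ?_⟩, ?_, ?_⟩ <;>
      · simp only [PhiPlus, PhiMinus, PsiPlus, PsiMinus, Prod.mk.injEq, one_ne_zero,
          zero_ne_one, and_self, and_false, false_and, and_true, true_and, if_true, if_false,
          ite_true, ite_false, Fin.zero_eq_one_iff, Fin.one_eq_zero_iff, Nat.succ_ne_self,
          show ((0:Fin 2) = 1) = False by simp, show ((1:Fin 2) = 0) = False by simp]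
        simp only [Complex.star_def, map_add, _root_.map_mul, map_div₀, _root_.map_one,
          map_zero, map_neg, Complex.conj_ofReal, Complex.conj_I]
        ring
  intro a b x y
  rw [hP, hP, hconj, hconj]
  rw [swap_conj' φ hsw (MA a x) (MA b y)]
  apply herm_real'
  intro p q
  simp only [kroneckerMap_apply, Matrix.map_apply, star_mul', star_star, starRingEnd_apply]
  rw [(hpos b y).1.apply, ← (hpos a x).1.apply]
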